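/- Let Q be a poset in P^ℓ_MFP satisfying the annihilator condition (a.c.). If Min(Q), with the subspace topology inherited from the Zariski topology on Spec(Q), is compact, then for every x ∈ Q there exists y ∈ Q such that cl(int(V(x))) = cl(D(y)) in Spec(Q). -/
import Mathlib


namespace ZD

variable (Q : Type*) [PartialOrder Q] [OrderBot Q]

variable {Q} in
/-- The lower cone `A^ℓ` of a subset of a poset. -/
def lCone (A : Set Q) : Set Q := {x | ∀ a ∈ A, x ≤ a}

variable {Q} in
/-- The upper cone `A^u` of a subset of a poset. -/
def uCone (A : Set Q) : Set Q := {x | ∀ a ∈ A, a ≤ x}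

variable {Q} in
/-- An ideal of a poset: nonempty and `a, b ∈ I` implies `{a,b}^{uℓ} ⊆ I`. -/
def IsIdeal (I : Set Q) : Prop :=
  I.Nonempty ∧ ∀ a ∈ I, ∀ b ∈ I, lCone (uCone {a, b}) ⊆ I

variable {Q} in
/-- A filter of a poset: nonempty and `a, b ∈ F` implies `{a,b}^{ℓu} ⊆ F`. -/
def IsPFilter (F : Set Q) : Prop :=
  F.Nonempty ∧ ∀ a ∈ F, ∀ b ∈ F, uCone (lCone {a, b}) ⊆ F

variable {Q} in
/-- An ℓ-filter: a filter such that `{a,b}^ℓ ∩ F ≠ ∅` for all `a, b ∈ F`. -/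
def IsLFilter (F : Set Q) : Prop :=
  IsPFilter F ∧ ∀ a ∈ F, ∀ b ∈ F, (lCone {a, b} ∩ F).Nonempty

variable {Q} in
/-- A prime ideal of a poset. -/
def IsPrimeIdeal (P : Set Q) : Prop :=
  IsIdeal P ∧ P ≠ Set.univ ∧ ∀ x y : Q, lCone {x, y} ⊆ P → x ∈ P ∨ y ∈ P

variable {Q} in
/-- A prime filter of a poset. -/
def IsPrimeFilter (F : Set Q) : Prop :=
  IsPFilter F ∧ F ≠ Set.univ ∧ ∀ x y : Q, uCone {x, y} ⊆ F → x ∈ F ∨ y ∈ F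

variable {Q} in
/-- A maximal filter: maximal among proper filters. -/
def IsMaxFilter (F : Set Q) : Prop :=
  IsPFilter F ∧ F ≠ Set.univ ∧
    ∀ G : Set Q, IsPFilter G → G ≠ Set.univ → F ⊆ G → F = G

variable {Q} in
/-- A maximal ℓ-filter: maximal among proper ℓ-filters. -/
def IsMaxLFilter (F : Set Q) : Prop :=
  IsLFilter F ∧ F ≠ Set.univ ∧
    ∀ G : Set Q, IsLFilter G → G ≠ Set.univ → F ⊆ G → F = G

/-- The class `P^ℓ_MFP`: every maximal filter is prime and every maximal ℓ-filter
is a maximal filter. -/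
def MemPMFPl : Prop :=
  (∀ F : Set Q, IsMaxFilter F → IsPrimeFilter F) ∧
  (∀ F : Set Q, IsMaxLFilter F → IsMaxFilter F)

variable {Q} in
/-- A minimal prime ideal of a poset. -/
def IsMinPrimeIdeal (P : Set Q) : Prop :=
  IsPrimeIdeal P ∧ ∀ P' : Set Q, IsPrimeIdeal P' → P' ⊆ P → P' = P

variable {Q} in
/-- The annihilator `x^⊥` of an element. -/
def ann (x : Q) : Set Q := {y | lCone {x, y} = {⊥}}

variable {Q} in
/-- The annihilator `A^⊥` of a subset. -/
def annSet (A : Set Q) : Set Q := {y | ∀ x ∈ A, lCone {x, y} = {⊥}}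

variable {Q} in
/-- The smallest ideal `(x] ∨ (y]` containing the principal ideals `(x]` and `(y]`. -/
def idealSup (x y : Q) : Set Q :=
  ⋂₀ {I : Set Q | IsIdeal I ∧ Set.Iic x ⊆ I ∧ Set.Iic y ⊆ I}

/-- A poset is quasi-complemented if for every `x` there is `y ≠ x` with
`{x,y}^ℓ = {0}` and `((x] ∨ (y])^⊥ = {0}`. -/
def QuasiComplemented : Prop :=
  ∀ x : Q, ∃ y : Q, y ≠ x ∧ lCone {x, y} = {⊥} ∧ annSet (idealSup x y) = {⊥}

/-- A poset is weakly quasi-complemented if for every `x` there are finitely many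
`y₁, …, yₙ` (n ≥ 1), all distinct from `x`, with `x^⊥⊥ = y₁^⊥ ∩ ⋯ ∩ yₙ^⊥`. -/
def WeaklyQuasiComplemented : Prop :=
  ∀ x : Q, ∃ s : Finset Q, s.Nonempty ∧ x ∉ s ∧ annSet (ann x) = ⋂ y ∈ s, ann y

/-- The annihilator condition (a.c.). -/
def SatisfiesAC : Prop := ∀ x y : Q, ∃ z : Q, ann x ∩ ann y = ann z

/-- The prime spectrum of a poset. -/
def Spec := {P : Set Q // IsPrimeIdeal P}

/-- The Zariski topology on `Spec Q`, whose closed sets are the sets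
`V(I) = {P : I ⊆ P}` for ideals `I` of `Q`. -/
instance : TopologicalSpace (Spec Q) :=
  TopologicalSpace.generateFrom
    {U : Set (Spec Q) | ∃ I : Set Q, IsIdeal I ∧ U = {P : Spec Q | ¬ I ⊆ P.1}}

variable {Q} in
/-- `V(x)`: the prime ideals containing `x`. -/
def zV (x : Q) : Set (Spec Q) := {P : Spec Q | x ∈ P.1}

variable {Q} in
/-- `D(x)`: the prime ideals not containing `x`. -/
def zD (x : Q) : Set (Spec Q) := {P : Spec Q | x ∉ P.1}

/-- `Min(Q)` as a subset of `Spec Q`. -/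
def MinSpec : Set (Spec Q) := {P : Spec Q | ∀ P' : Set Q, IsPrimeIdeal P' → P' ⊆ P.1 → P' = P.1}

variable {Q} in
/-- Adjacency in the zero-divisor graph `Γ(Q)`. -/
def zdAdj (x y : Q) : Prop :=
  x ≠ y ∧ x ≠ ⊥ ∧ y ≠ ⊥ ∧ lCone {x, y} = ({⊥} : Set Q)

variable {Q} in
/-- Vertices of the zero-divisor graph `Γ(Q)`: the nonzero zero-divisors. -/
def IsZDVertex (x : Q) : Prop :=
  x ≠ ⊥ ∧ ∃ y : Q, y ≠ ⊥ ∧ lCone {x, y} = ({⊥} : Set Q)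

variable {Q} in
/-- `y` is a complement of `x` in `Γ(Q)`. -/
def IsComplementOf (x y : Q) : Prop :=
  zdAdj x y ∧ ∀ c : Q, ¬ (zdAdj c x ∧ zdAdj c y)

/-- The zero-divisor graph `Γ(Q)` is complemented. -/
def GammaComplemented : Prop :=
  ∀ x : Q, IsZDVertex x → ∃ y : Q, IsComplementOf x y

/-- The zero-divisor graph `Γ(Q)` is uniquely complemented. -/
def GammaUniquelyComplemented : Prop :=
  GammaComplemented Q ∧
    ∀ a b c : Q, IsComplementOf a b → IsComplementOf a c →
      ∀ x : Q, (zdAdj x b ↔ zdAdj x c)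

end ZD

namespace ZD

variable {Q : Type*} [PartialOrder Q] [OrderBot Q]

lemma mem_lCone_pair {x y z : Q} : z ∈ lCone ({x, y} : Set Q) ↔ z ≤ x ∧ z ≤ y := by
  simp [lCone]

lemma bot_mem_lCone_pair (x y : Q) : (⊥ : Q) ∈ lCone ({x, y} : Set Q) :=
  mem_lCone_pair.2 ⟨bot_le, bot_le⟩

lemma ann_comm {x y : Q} (h : y ∈ ann x) : x ∈ ann y := by
  have h' : lCone ({x, y} : Set Q) = {⊥} := h
  show lCone ({y, x} : Set Q) = {⊥}
  rwa [Set.pair_comm]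

lemma ann_bot : ann (⊥ : Q) = Set.univ := by
  ext y
  simp only [Set.mem_univ, iff_true]
  show lCone ({⊥, y} : Set Q) = {⊥}
  ext z
  simp only [mem_lCone_pair, Set.mem_singleton_iff]
  constructor
  · rintro ⟨h, -⟩; exact le_antisymm h bot_le
  · rintro rfl; exact ⟨le_rfl, bot_le⟩

lemma IsIdeal.downset {I : Set Q} (hI : IsIdeal I) {a b : Q} (ha : a ∈ I) (hba : b ≤ a) :
    b ∈ I :=
  hI.2 a ha a ha (fun c hc => hba.trans (hc a (Set.mem_insert a {a})))

lemma IsIdeal.bot_mem {I : Set Q} (hI : IsIdeal I) : (⊥ : Q) ∈ I := by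
  obtain ⟨a, ha⟩ := hI.1
  exact hI.downset ha bot_le

lemma IsPFilter.upset {F : Set Q} (hF : IsPFilter F) {a b : Q} (ha : a ∈ F) (hab : a ≤ b) :
    b ∈ F :=
  hF.2 a ha a ha (fun c hc => (hc a (Set.mem_insert a {a})).trans hab)

lemma IsPFilter.eq_univ_of_bot_mem {F : Set Q} (hF : IsPFilter F) (hb : (⊥ : Q) ∈ F) :
    F = Set.univ :=
  Set.eq_univ_of_forall fun z => hF.upset hb bot_le

lemma IsPrimeIdeal.compl_lfilter {P : Set Q} (hP : IsPrimeIdeal P) : IsLFilter Pᶜ := by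
  obtain ⟨hI, hne, hpr⟩ := hP
  refine ⟨⟨?_, ?_⟩, ?_⟩
  · obtain ⟨z, hz⟩ := (Set.ne_univ_iff_exists_notMem P).1 hne
    exact ⟨z, hz⟩
  · intro a ha b hb c hc hcP
    have hsub : lCone ({a, b} : Set Q) ⊆ P := fun z hz => hI.downset hcP (hc z hz)
    rcases hpr a b hsub with h | h
    · exact ha h
    · exact hb h
  · intro a ha b hb
    by_contra h
    rw [Set.not_nonempty_iff_eq_empty] at h
    have hsub : lCone ({a, b} : Set Q) ⊆ P := by
      intro z hz
      by_contra hzP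
      exact Set.eq_empty_iff_forall_notMem.1 h z ⟨hz, hzP⟩
    rcases hpr a b hsub with h' | h'
    · exact ha h'
    · exact hb h'

lemma IsPrimeFilter.compl_primeIdeal {F : Set Q} (hF : IsPrimeFilter F) (hl : IsLFilter F) :
    IsPrimeIdeal Fᶜ := by
  obtain ⟨hPF, hne, hpr⟩ := hF
  refine ⟨⟨?_, ?_⟩, ?_, ?_⟩
  · obtain ⟨z, hz⟩ := (Set.ne_univ_iff_exists_notMem F).1 hne
    exact ⟨z, hz⟩
  · intro a ha b hb c hc hcF
    have hsub : uCone ({a, b} : Set Q) ⊆ F := fun z hz => hPF.upset hcF (hc z hz)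
    rcases hpr a b hsub with h | h
    · exact ha h
    · exact hb h
  · intro h
    obtain ⟨z, hz⟩ := hPF.1
    exact (h ▸ Set.mem_univ z : z ∈ Fᶜ) hz
  · intro a b hsub
    by_cases ha : a ∈ F
    · by_cases hb : b ∈ F
      · obtain ⟨z, hz1, hz2⟩ := hl.2 a ha b hb
        exact absurd hz2 (hsub hz1)
      · exact Or.inr hb
    · exact Or.inl ha

lemma exists_maxLFilter {F : Set Q} (hF : IsLFilter F) (hne : F ≠ Set.univ) :
    ∃ M, IsMaxLFilter M ∧ F ⊆ M := by
  obtain ⟨M, hFM, hM⟩ := zorn_subset_nonempty {G : Set Q | IsLFilter G ∧ G ≠ Set.univ}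
    (fun c hcS hchain hcne => by
      obtain ⟨F₀, hF₀⟩ := hcne
      refine ⟨⋃₀ c, ⟨⟨⟨?_, ?_⟩, ?_⟩, ?_⟩, fun s hs => Set.subset_sUnion_of_mem hs⟩
      · obtain ⟨z, hz⟩ := (hcS hF₀).1.1.1
        exact ⟨z, F₀, hF₀, hz⟩
      · rintro a ⟨F₁, hF₁, ha⟩ b ⟨F₂, hF₂, hb⟩ c hc
        rcases hchain.total hF₁ hF₂ with h | h
        · exact ⟨F₂, hF₂, (hcS hF₂).1.1.2 a (h ha) b hb hc⟩
        · exact ⟨F₁, hF₁, (hcS hF₁).1.1.2 a ha b (h hb) hc⟩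
      · rintro a ⟨F₁, hF₁, ha⟩ b ⟨F₂, hF₂, hb⟩
        rcases hchain.total hF₁ hF₂ with h | h
        · obtain ⟨z, hz1, hz2⟩ := (hcS hF₂).1.2 a (h ha) b hb
          exact ⟨z, hz1, F₂, hF₂, hz2⟩
        · obtain ⟨z, hz1, hz2⟩ := (hcS hF₁).1.2 a ha b (h hb)
          exact ⟨z, hz1, F₁, hF₁, hz2⟩
      · intro h
        obtain ⟨F₁, hF₁, hb⟩ := (h ▸ Set.mem_univ (⊥ : Q) : (⊥ : Q) ∈ ⋃₀ c)
        exact (hcS hF₁).2 ((hcS hF₁).1.1.eq_univ_of_bot_mem hb))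
    F ⟨hF, hne⟩
  exact ⟨M, ⟨hM.prop.1, hM.prop.2,
    fun G hG hGne hMG => hM.eq_of_subset ⟨hG, hGne⟩ hMG⟩, hFM⟩

/-- Key lemma: if `P` is a minimal prime ideal and `x ∈ P`,
then there is `a ∉ P` with `a ∈ x^⊥`. -/
lemma minprime_exists_ann (hQ : MemPMFPl Q) {P : Set Q} (hP : IsPrimeIdeal P)
    (hminP : ∀ P' : Set Q, IsPrimeIdeal P' → P' ⊆ P → P' = P) {x : Q} (hx : x ∈ P) :
    ∃ a, a ∉ P ∧ a ∈ ann x := by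
  have hlf : IsLFilter (Pᶜ : Set Q) := hP.compl_lfilter
  have hproper : (Pᶜ : Set Q) ≠ Set.univ := by
    intro h
    exact (h ▸ Set.mem_univ (⊥ : Q) : (⊥ : Q) ∈ Pᶜ) hP.1.bot_mem
  obtain ⟨M, hM, hPM⟩ := exists_maxLFilter hlf hproper
  have hMF : IsMaxFilter M := hQ.2 M hM
  have hMP : IsPrimeFilter M := hQ.1 M hMF
  have hMc : IsPrimeIdeal Mᶜ := hMP.compl_primeIdeal hM.1
  have hMcP : Mᶜ ⊆ P := Set.compl_subset_comm.1 hPM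
  have hMPc : M = Pᶜ := by rw [← hminP Mᶜ hMc hMcP, compl_compl]
  subst hMPc
  set G : Set Q := {z : Q | ∃ f ∈ (Pᶜ : Set Q), z ∈ uCone (lCone ({x, f} : Set Q))} with hGdef
  obtain ⟨f₀, hf₀⟩ := hlf.1.1
  have hself : ∀ f : Q, f ∈ uCone (lCone ({x, f} : Set Q)) := by
    intro f c hc
    exact hc f (Set.mem_insert_iff.2 (Or.inr rfl))
  have hxmem : ∀ f : Q, x ∈ uCone (lCone ({x, f} : Set Q)) := by
    intro f c hc
    exact hc x (Set.mem_insert x {f})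
  have hPG : (Pᶜ : Set Q) ⊆ G := fun f hf => ⟨f, hf, hself f⟩
  have hxG : x ∈ G := ⟨f₀, hf₀, hxmem f₀⟩
  have hGF : IsPFilter G := by
    constructor
    · exact ⟨x, hxG⟩
    · rintro a ⟨f, hf, haf⟩ b ⟨g, hg, hbg⟩ c hc
      obtain ⟨e, he1, he2⟩ := hlf.2 f hf g hg
      refine ⟨e, he2, ?_⟩
      intro z hz
      rcases mem_lCone_pair.1 hz with ⟨hzx, hze⟩
      have hza : z ≤ a := haf z (mem_lCone_pair.2 ⟨hzx, hze.trans (mem_lCone_pair.1 he1).1⟩)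
      have hzb : z ≤ b := hbg z (mem_lCone_pair.2 ⟨hzx, hze.trans (mem_lCone_pair.1 he1).2⟩)
      exact hc z (mem_lCone_pair.2 ⟨hza, hzb⟩)
  by_cases hGu : G = Set.univ
  · obtain ⟨f, hf, hbf⟩ := (hGu ▸ Set.mem_univ (⊥ : Q) : (⊥ : Q) ∈ G)
    refine ⟨f, hf, ?_⟩
    show lCone ({x, f} : Set Q) = {⊥}
    exact Set.eq_singleton_iff_unique_mem.2
      ⟨bot_mem_lCone_pair x f, fun z hz => le_bot_iff.1 (hbf z hz)⟩
  · have h' : (Pᶜ : Set Q) = G := hMF.2.2 G hGF hGu hPG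
    rw [← h'] at hxG
    exact absurd hx hxG

lemma exists_minprime_subset {P : Set Q} (hP : IsPrimeIdeal P) :
    ∃ P₀ : Set Q, IsPrimeIdeal P₀ ∧ (∀ P' : Set Q, IsPrimeIdeal P' → P' ⊆ P₀ → P' = P₀) ∧
      P₀ ⊆ P := by
  obtain ⟨m, hmP, hm⟩ := zorn_superset_nonempty {I : Set Q | IsPrimeIdeal I ∧ I ⊆ P}
    (fun c hcS hchain hcne => by
      obtain ⟨I₀, hI₀⟩ := hcne
      refine ⟨⋂₀ c, ⟨⟨⟨?_, ?_⟩, ?_, ?_⟩, (Set.sInter_subset_of_mem hI₀).trans (hcS hI₀).2⟩,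
        fun s hs => Set.sInter_subset_of_mem hs⟩
      · exact ⟨⊥, fun I hI => (hcS hI).1.1.bot_mem⟩
      · intro a ha b hb z hz I hI
        exact (hcS hI).1.1.2 a (ha I hI) b (hb I hI) hz
      · intro h
        exact (hcS hI₀).1.2.1 (Set.eq_univ_of_univ_subset
          (h ▸ Set.sInter_subset_of_mem hI₀))
      · intro a b hsub
        by_contra hcon
        push_neg at hcon
        obtain ⟨ha, hb⟩ := hcon
        rw [Set.mem_sInter] at ha hb
        push_neg at ha hb
        obtain ⟨I₁, hI₁, ha1⟩ := ha
        obtain ⟨I₂, hI₂, hb2⟩ := hb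
        rcases hchain.total hI₁ hI₂ with h | h
        · rcases (hcS hI₁).1.2.2 a b (fun z hz => hsub hz I₁ hI₁) with h' | h'
          · exact ha1 h'
          · exact hb2 (h h')
        · rcases (hcS hI₂).1.2.2 a b (fun z hz => hsub hz I₂ hI₂) with h' | h'
          · exact ha1 (h h')
          · exact hb2 h')
    P ⟨hP, subset_rfl⟩
  refine ⟨m, hm.prop.1, fun P' hP' hsub => ?_, hm.prop.2⟩
  exact subset_antisymm hsub (hm.2 ⟨hP', hsub.trans hm.prop.2⟩ hsub)

lemma isIdeal_Iic (a : Q) : IsIdeal (Set.Iic a : Set Q) := by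
  refine ⟨⟨a, le_rfl⟩, ?_⟩
  intro b hb c hc z hz
  refine hz a ?_
  intro m hm
  simp only [Set.mem_insert_iff, Set.mem_singleton_iff] at hm
  rcases hm with rfl | rfl
  · exact hb
  · exact hc

lemma generateOpen_downset {U : Set (Spec Q)}
    (h : TopologicalSpace.GenerateOpen
      {U : Set (Spec Q) | ∃ I : Set Q, IsIdeal I ∧ U = {P : Spec Q | ¬ I ⊆ P.1}} U) :
    ∀ P P' : Spec Q, P'.1 ⊆ P.1 → P ∈ U → P' ∈ U := by
  induction h with
  | basic s hs =>
      obtain ⟨I, hI, rfl⟩ := hs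
      intro P P' hsub hP hIc
      exact hP (hIc.trans hsub)
  | univ => intro P P' _ _; trivial
  | inter s t hs ht ihs iht =>
      intro P P' hsub hP
      exact ⟨ihs P P' hsub hP.1, iht P P' hsub hP.2⟩
  | sUnion S' hS' ih =>
      intro P P' hsub hP
      obtain ⟨s, hsS, hPs⟩ := hP
      exact ⟨s, hsS, ih s hsS P P' hsub hPs⟩

lemma isOpen_downset {U : Set (Spec Q)} (hU : IsOpen U) {P P' : Spec Q}
    (hsub : P'.1 ⊆ P.1) (hP : P ∈ U) : P' ∈ U := by
  have h : TopologicalSpace.GenerateOpen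
      {U : Set (Spec Q) | ∃ I : Set Q, IsIdeal I ∧ U = {P : Spec Q | ¬ I ⊆ P.1}} U := hU
  exact generateOpen_downset h P P' hsub hP

lemma isOpen_zD (a : Q) : IsOpen (zD a : Set (Spec Q)) := by
  have heq : (zD a : Set (Spec Q)) = {P : Spec Q | ¬ Set.Iic a ⊆ P.1} := by
    ext P
    simp only [zD, Set.mem_setOf_eq]
    constructor
    · intro h hsub; exact h (hsub le_rfl)
    · intro h ha; exact h (fun z hz => P.2.1.downset ha hz)
  rw [heq]
  exact TopologicalSpace.isOpen_generateFrom_of_mem ⟨Set.Iic a, isIdeal_Iic a, rfl⟩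

lemma isClosed_zV (a : Q) : IsClosed (zV a : Set (Spec Q)) := by
  rw [← isOpen_compl_iff]
  have heq : (zV a : Set (Spec Q))ᶜ = zD a := rfl
  rw [heq]
  exact isOpen_zD a

lemma zD_subset_zV {x a : Q} (h : a ∈ ann x) : (zD a : Set (Spec Q)) ⊆ zV x := by
  intro P hP
  have hsub : lCone ({x, a} : Set Q) ⊆ P.1 := by
    intro z hz
    rw [(h : lCone ({x, a} : Set Q) = {⊥}), Set.mem_singleton_iff] at hz
    exact hz ▸ P.2.1.bot_mem
  rcases P.2.2.2 x a hsub with h' | h'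
  · exact h'
  · exact absurd h' hP

lemma exists_ann_inter (hac : SatisfiesAC Q) (s : Finset Q) :
    ∃ y : Q, ann y = ⋂ a ∈ s, ann a := by
  classical
  induction s using Finset.induction_on with
  | empty => exact ⟨⊥, by simp [ann_bot]⟩
  | @insert a s hnotin ih =>
      obtain ⟨y', hy'⟩ := ih
      obtain ⟨z, hz⟩ := hac a y'
      refine ⟨z, ?_⟩
      rw [Finset.set_biInter_insert, ← hy', ← hz]

end ZD

open ZD in
/-- Let `Q ∈ P^ℓ_MFP` satisfy a.c. If `Min(Q)` (with the subspace
topology from the Zariski topology on `Spec Q`) is compact, then for every `x` there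
is `y` with `cl(int(V(x))) = cl(D(y))` in `Spec Q`. -/
theorem stmt_9 (Q : Type*) [PartialOrder Q] [OrderBot Q] (hQ : MemPMFPl Q)
    (hac : SatisfiesAC Q) (hmin : IsCompact (MinSpec Q)) :
    ∀ x : Q, ∃ y : Q, closure (interior (zV x)) = closure (zD y) := by
  intro x
  classical
  have hcov : MinSpec Q ∩ zV x ⊆ ⋃ a : (ann x : Set Q), zD (a : Q) := by
    rintro P ⟨hPmin, hPx⟩
    obtain ⟨a, haP, hax⟩ := minprime_exists_ann hQ P.2 hPmin hPx
    exact Set.mem_iUnion.2 ⟨⟨a, hax⟩, haP⟩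
  have hcomp : IsCompact (MinSpec Q ∩ zV x) := hmin.inter_right (isClosed_zV x)
  obtain ⟨t, ht⟩ := hcomp.elim_finite_subcover (fun a : (ann x : Set Q) => zD (a : Q))
    (fun a => isOpen_zD (a : Q)) hcov
  obtain ⟨y, hy⟩ := exists_ann_inter hac (t.image Subtype.val)
  have hxy : y ∈ ann x := by
    apply ann_comm
    rw [hy]
    apply Set.mem_iInter₂.2
    intro a ha
    rw [Finset.mem_image] at ha
    obtain ⟨a', -, rfl⟩ := ha
    exact ann_comm a'.2
  have hyD : ∀ P : Spec Q, (∀ P' : Set Q, IsPrimeIdeal P' → P' ⊆ P.1 → P' = P.1) →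
      ∀ a' : (ann x : Set Q), a' ∈ t → (a' : Q) ∉ P.1 → y ∉ P.1 := by
    intro P hPmin a' ha't haP hyP
    obtain ⟨g, hgP, hgy⟩ := minprime_exists_ann hQ P.2 hPmin hyP
    have hga : g ∈ ann (a' : Q) := by
      have hsub : ann y ⊆ ann (a' : Q) := by
        rw [hy]
        exact Set.biInter_subset_of_mem (Finset.mem_image.2 ⟨a', ha't, rfl⟩)
      exact hsub hgy
    have hsub : lCone ({(a' : Q), g} : Set Q) ⊆ P.1 := by
      intro z hz
      rw [(hga : lCone ({(a' : Q), g} : Set Q) = {⊥}), Set.mem_singleton_iff] at hz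
      exact hz ▸ P.2.1.bot_mem
    rcases P.2.2.2 (a' : Q) g hsub with h | h
    · exact haP h
    · exact hgP h
  refine ⟨y, subset_antisymm ?_ ?_⟩
  · refine closure_minimal ?_ isClosed_closure
    intro P hP
    rw [mem_closure_iff]
    intro O hO hPO
    obtain ⟨P₀s, hP₀prime, hP₀min, hP₀sub⟩ := exists_minprime_subset P.2
    set P₀ : Spec Q := ⟨P₀s, hP₀prime⟩ with hP₀def
    have hP₀O : P₀ ∈ O := isOpen_downset hO hP₀sub hPO
    have hP₀int : P₀ ∈ interior (zV x) := isOpen_downset isOpen_interior hP₀sub hP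
    have hP₀V : P₀ ∈ zV x := interior_subset hP₀int
    have hmem : P₀ ∈ ⋃ a ∈ t, zD ((a : (ann x : Set Q)) : Q) := ht ⟨hP₀min, hP₀V⟩
    rw [Set.mem_iUnion₂] at hmem
    obtain ⟨a', ha't, haP₀⟩ := hmem
    exact ⟨P₀, hP₀O, hyD P₀ hP₀min a' ha't haP₀⟩
  · exact closure_mono (interior_maximal (zD_subset_zV hxy) (isOpen_zD y))
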